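/- Let G=(V,E) be an undirected connected simple locally finite graph and let x,y be neighboring vertices. Then κ(x,y) ≥ −(1 − 1/d_x − 1/d_y − ♯(x,y)/(d_x∧d_y))_+ − (1 − 1/d_x − 1/d_y − ♯(x,y)/(d_x∨d_y))_+ + ♯(x,y)/(d_x∨d_y), where d_x∧d_y = min{d_x,d_y} and d_x∨d_y = max{d_x,d_y}. -/

import Mathlib

open SimpleGraph Finset

variable {V : Type*}

/-- The probability measure attached to a vertex `x`: uniform on its neighbors. -/
noncomputable def nbrMeasure (G : SimpleGraph V) [G.LocallyFinite] [DecidableRel G.Adj]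
    (x z : V) : ℝ :=
  if G.Adj x z then ((G.degree x : ℝ))⁻¹ else 0

/-- A coupling (transfer plan) between the measures `m_x` and `m_y`. -/
def IsCoupling (G : SimpleGraph V) [G.LocallyFinite] [DecidableRel G.Adj]
    (x y : V) (ξ : V → V → ℝ) : Prop :=
  (∀ u v, 0 ≤ ξ u v) ∧
  (∀ u v, ξ u v ≠ 0 → G.Adj x u ∧ G.Adj y v) ∧
  (∀ u, ∑ v ∈ G.neighborFinset y, ξ u v = nbrMeasure G x u) ∧
  (∀ v, ∑ u ∈ G.neighborFinset x, ξ u v = nbrMeasure G y v)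

/-- The transportation distance `W₁(m_x, m_y)`. -/
noncomputable def W1 (G : SimpleGraph V) [G.LocallyFinite] [DecidableRel G.Adj]
    (x y : V) : ℝ :=
  sInf { c : ℝ | ∃ ξ : V → V → ℝ, IsCoupling G x y ξ ∧
    c = ∑ u ∈ G.neighborFinset x, ∑ v ∈ G.neighborFinset y, (G.dist u v : ℝ) * ξ u v }

/-- Ollivier's Ricci curvature `κ(x,y) = 1 - W₁(m_x,m_y)/d(x,y)`. -/
noncomputable def ricci (G : SimpleGraph V) [G.LocallyFinite] [DecidableRel G.Adj]
    (x y : V) : ℝ :=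
  1 - W1 G x y / (G.dist x y : ℝ)

/-- Positive part of a real number: `a₊ = max a 0`. -/
noncomputable def posPart' (a : ℝ) : ℝ := max a 0

/-- `♯(x,y)`: the number of common neighbors of `x` and `y`. -/
def triangles (G : SimpleGraph V) [G.LocallyFinite] [DecidableEq V] (x y : V) : ℕ :=
  (G.neighborFinset x ∩ G.neighborFinset y).card

/-!
Assume `d_x ≤ d_y`; the other case follows because `W₁` is symmetric. Let `C` be the common
neighbours of `x` and `y`, `A` the neighbours of `x` other than `y` not adjacent to `y`, and `B`
those of `y` other than `x` not adjacent to `x`. A coupling of `m_x` and `m_y`: each vertex of `C`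
keeps mass `1/d_y` in place, the demand `1/d_y` of `x` is met by neighbours of `x` (distance `1`),
and all the remaining mass is spread evenly over `B`. It travels distance `1` from `y`, at most `2`
from `C` and at most `3` from `A`, so the cost is `1 - ♯/d_y` plus one extra step per unit sent
from `C` to `B` and two per unit sent from `A` to `B`. Filling the demand of `x` greedily, first
from `A` (total mass `|A|/d_x`) and then from the excess `1/d_x - 1/d_y` of each vertex of `C`,
sends `(|A|/d_x - 1/d_y)₊ = (1 - 1/d_x - 1/d_y - ♯/d_x)₊` from `A` to `B` and
`(1 - 1/d_x - 1/d_y - ♯/d_y)₊` in total from `A ∪ C` to `B`, which is the bound.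
-/

section Neighbors

variable (G : SimpleGraph V) [G.LocallyFinite] {x y : V}

theorem cast_degree_pos_of_adj (hxy : G.Adj x y) : (0 : ℝ) < G.degree x :=
  Nat.cast_pos.2 ((G.degree_pos_iff_exists_adj x).2 ⟨y, hxy⟩)

variable [DecidableEq V]

abbrev commonNeighborFinset (x y : V) : Finset V :=
  G.neighborFinset x ∩ G.neighborFinset y

def privateNeighborFinset (x y : V) : Finset V :=
  G.neighborFinset x \ insert y (G.neighborFinset y)

theorem triangles_comm (x y : V) : triangles G x y = triangles G y x := by
  rw [triangles, triangles, inter_comm]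

theorem neighborFinset_eq_insert_union (hxy : G.Adj x y) :
    G.neighborFinset x =
      insert y (commonNeighborFinset G x y ∪ privateNeighborFinset G x y) := by
  ext u
  by_cases huy : u = y
  · simp [huy, hxy]
  · by_cases hu : G.Adj y u <;> simp [privateNeighborFinset, huy, hu]

theorem sum_neighborFinset_of_constant_on_classes (hxy : G.Adj x y) {f : V → ℝ} {cC cA : ℝ}
    (hC : ∀ u ∈ commonNeighborFinset G x y, f u = cC)
    (hA : ∀ u ∈ privateNeighborFinset G x y, f u = cA) :
    ∑ u ∈ G.neighborFinset x, f u =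
      f y + triangles G x y * cC + #(privateNeighborFinset G x y) * cA := by
  have hyC : y ∉ commonNeighborFinset G x y := by simp
  have hyA : y ∉ privateNeighborFinset G x y := by simp [privateNeighborFinset]
  have hCA : Disjoint (commonNeighborFinset G x y) (privateNeighborFinset G x y) :=
    Finset.disjoint_left.2 fun u hu => by simp_all [privateNeighborFinset]
  rw [neighborFinset_eq_insert_union G hxy, sum_insert (by simp [hyC, hyA]), sum_union hCA,
    sum_congr rfl hC, sum_congr rfl hA, sum_const, sum_const, nsmul_eq_mul, nsmul_eq_mul, triangles,
    add_assoc]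

theorem degree_eq_one_add_triangles_add (hxy : G.Adj x y) :
    (G.degree x : ℝ) = 1 + triangles G x y + #(privateNeighborFinset G x y) := by
  have := sum_neighborFinset_of_constant_on_classes G hxy (f := fun _ => (1 : ℝ))
    (fun _ _ => rfl) fun _ _ => rfl
  simpa [card_neighborFinset_eq_degree] using this

theorem one_add_triangles_add_mul_inv_degree (hxy : G.Adj x y) :
    (1 + triangles G x y + #(privateNeighborFinset G x y) : ℝ) * (G.degree x : ℝ)⁻¹ = 1 := by
  rw [← degree_eq_one_add_triangles_add G hxy,
    mul_inv_cancel₀ (cast_degree_pos_of_adj G hxy).ne']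

theorem eq_or_mem_common_or_mem_private (hxy : G.Adj x y) {u : V} (hu : u ∈ G.neighborFinset x) :
    u = y ∨ u ∈ commonNeighborFinset G x y ∨ u ∈ privateNeighborFinset G x y := by
  rwa [neighborFinset_eq_insert_union G hxy, mem_insert, mem_union] at hu

noncomputable def byClass (x y : V) (cy cC cA : ℝ) (u : V) : ℝ :=
  if u = y then cy
  else if u ∈ commonNeighborFinset G x y then cC
  else if u ∈ privateNeighborFinset G x y then cA
  else 0

section ByClass

variable {cy cC cA : ℝ}

theorem byClass_nonneg (hy : 0 ≤ cy) (hC : 0 ≤ cC) (hA : 0 ≤ cA) (u : V) :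
    0 ≤ byClass G x y cy cC cA u := by
  unfold byClass
  split_ifs <;> first | assumption | exact le_rfl

theorem byClass_self : byClass G x y cy cC cA y = cy := if_pos rfl

theorem byClass_of_mem_common {u : V} (hu : u ∈ commonNeighborFinset G x y) :
    byClass G x y cy cC cA u = cC := by
  have huy : u ≠ y := by rintro rfl; simp at hu
  simp [byClass, huy, hu]

theorem byClass_of_mem_private {u : V} (hu : u ∈ privateNeighborFinset G x y) :
    byClass G x y cy cC cA u = cA := by
  simp only [privateNeighborFinset, mem_sdiff, mem_insert, not_or] at hu
  simp [byClass, privateNeighborFinset, hu.1, hu.2.1, hu.2.2]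

theorem byClass_of_not_adj (hxy : G.Adj x y) {u : V} (hu : ¬G.Adj x u) :
    byClass G x y cy cC cA u = 0 := by
  have huy : u ≠ y := by rintro rfl; exact hu hxy
  simp [byClass, privateNeighborFinset, huy, hu]

end ByClass

theorem dist_le_byClass (hxy : G.Adj x y) {u v : V} (hu : u ∈ G.neighborFinset x)
    (hv : v ∈ privateNeighborFinset G y x) : (G.dist u v : ℝ) ≤ byClass G x y 1 2 3 u := by
  have hyv : G.Adj y v := (G.mem_neighborFinset y v).1 (mem_sdiff.1 hv).1
  have hux : G.Adj u x := ((G.mem_neighborFinset x u).1 hu).symm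
  rcases eq_or_mem_common_or_mem_private G hxy hu with rfl | hu' | hu'
  · rw [byClass_self, dist_eq_one_iff_adj.2 hyv, Nat.cast_one]
  · have huy : G.Adj u y := ((G.mem_neighborFinset y u).1 (mem_inter.1 hu').2).symm
    rw [byClass_of_mem_common G hu']
    exact_mod_cast G.dist_le (.cons huy (.cons hyv .nil))
  · rw [byClass_of_mem_private G hu']
    exact_mod_cast G.dist_le (.cons hux (.cons hxy (.cons hyv .nil)))

noncomputable def transportPlan (x y : V) (a r : V → ℝ) (u v : V) : ℝ :=
  (if u ∈ commonNeighborFinset G x y ∧ v = u then (G.degree y : ℝ)⁻¹ else 0) +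
    (if v = x then a u else 0) +
    if v ∈ privateNeighborFinset G y x then r u / #(privateNeighborFinset G y x) else 0

theorem sum_dist_mul_transportPlan_le (hxy : G.Adj x y) {a r D : V → ℝ} (hr : ∀ u, 0 ≤ r u)
    (hD0 : ∀ u, 0 ≤ D u)
    (hD : ∀ u ∈ G.neighborFinset x, ∀ v ∈ privateNeighborFinset G y x,
      (G.dist u v : ℝ) ≤ D u) :
    ∑ u ∈ G.neighborFinset x, ∑ v ∈ G.neighborFinset y,
        (G.dist u v : ℝ) * transportPlan G x y a r u v ≤
      ∑ u ∈ G.neighborFinset x, (a u + D u * r u) := by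
  refine sum_le_sum fun u hu => ?_
  set B := privateNeighborFinset G y x
  have hxNy : x ∈ G.neighborFinset y := (G.mem_neighborFinset y x).2 hxy.symm
  have hux : (G.dist u x : ℝ) = 1 := by
    exact_mod_cast dist_eq_one_iff_adj.2 ((G.mem_neighborFinset x u).1 hu).symm
  have hkept : ∑ v ∈ G.neighborFinset y, (G.dist u v : ℝ) *
      (if u ∈ commonNeighborFinset G x y ∧ v = u then (G.degree y : ℝ)⁻¹ else 0) = 0 :=
    sum_eq_zero fun v _ => by
      split_ifs with h
      · rw [h.2, G.dist_self, Nat.cast_zero, zero_mul]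
      · exact mul_zero _
  have hspread :
      ∑ v ∈ G.neighborFinset y, (G.dist u v : ℝ) * (if v ∈ B then r u / #B else 0) ≤
        D u * r u :=
    calc ∑ v ∈ G.neighborFinset y, (G.dist u v : ℝ) * (if v ∈ B then r u / #B else 0)
        = ∑ v ∈ B, (G.dist u v : ℝ) * (r u / #B) := by
          simp_rw [mul_ite, mul_zero]
          rw [sum_ite_mem, inter_eq_right.2 (show B ⊆ G.neighborFinset y from sdiff_subset)]
      _ ≤ ∑ v ∈ B, D u * (r u / #B) :=
          sum_le_sum fun v hv => mul_le_mul_of_nonneg_right (hD u hu v hv) (by positivity [hr u])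
      _ = D u * (#B * (r u / #B)) := by rw [sum_const, nsmul_eq_mul]; ring
      _ ≤ D u * r u := by
          refine mul_le_mul_of_nonneg_left ?_ (hD0 u)
          rcases eq_or_ne (#B : ℝ) 0 with hB | hB
          · rw [hB, zero_mul]; exact hr u
          · rw [mul_div_cancel₀ _ hB]
  have hdelivered :
      ∑ v ∈ G.neighborFinset y, (G.dist u v : ℝ) * (if v = x then a u else 0) = a u := by
    simp_rw [mul_ite, mul_zero]
    rw [sum_ite_eq', if_pos hxNy, hux, one_mul]
  simp only [transportPlan, mul_add, sum_add_distrib, hkept, hdelivered]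
  linarith

end Neighbors

theorem sub_min_add_two_mul_sub_min {α e t : ℝ} (he : 0 ≤ e) :
    e - min e (t - min α t) + 2 * (α - min α t) = max (α - t) 0 + max (α + e - t) 0 := by
  rcases le_total α t with h | h
  · rw [min_eq_left h, max_eq_right (by linarith)]
    rcases le_total e (t - α) with h' | h'
    · rw [min_eq_left h', max_eq_right (by linarith)]; ring
    · rw [min_eq_right h', max_eq_left (by linarith)]; ring
  · rw [min_eq_right h, sub_self, min_eq_right he, max_eq_left (by linarith),
      max_eq_left (by linarith)]
    ring

section Transport

variable (G : SimpleGraph V) [G.LocallyFinite] [DecidableRel G.Adj] {x y : V}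

theorem nbrMeasure_of_adj {u : V} (h : G.Adj x u) : nbrMeasure G x u = (G.degree x : ℝ)⁻¹ :=
  if_pos h

theorem nbrMeasure_of_not_adj {u : V} (h : ¬G.Adj x u) : nbrMeasure G x u = 0 :=
  if_neg h

theorem sum_nbrMeasure (hxy : G.Adj x y) : ∑ u ∈ G.neighborFinset x, nbrMeasure G x u = 1 := by
  rw [sum_congr rfl fun u hu => nbrMeasure_of_adj G ((G.mem_neighborFinset x u).1 hu), sum_const,
    card_neighborFinset_eq_degree, nsmul_eq_mul,
    mul_inv_cancel₀ (cast_degree_pos_of_adj G hxy).ne']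

theorem W1_le_of_isCoupling {ξ : V → V → ℝ} (hξ : IsCoupling G x y ξ) :
    W1 G x y ≤
      ∑ u ∈ G.neighborFinset x, ∑ v ∈ G.neighborFinset y, (G.dist u v : ℝ) * ξ u v := by
  refine csInf_le ⟨0, ?_⟩ ⟨ξ, hξ, rfl⟩
  rintro c ⟨ζ, hζ, rfl⟩
  exact sum_nonneg fun u _ => sum_nonneg fun v _ => mul_nonneg (Nat.cast_nonneg _) (hζ.1 u v)

theorem IsCoupling.swap {ξ : V → V → ℝ} (hξ : IsCoupling G x y ξ) :
    IsCoupling G y x fun u v => ξ v u :=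
  let ⟨hnonneg, hsupp, hrow, hcol⟩ := hξ
  ⟨fun u v => hnonneg v u, fun u v h => (hsupp v u h).symm, hcol, hrow⟩

theorem W1_comm (x y : V) : W1 G x y = W1 G y x := by
  unfold W1
  congr 1
  ext c
  constructor <;>
  · rintro ⟨ξ, hξ, rfl⟩
    refine ⟨_, hξ.swap G, ?_⟩
    rw [sum_comm]
    simp_rw [G.dist_comm]

variable [DecidableEq V]

structure IsMassSplit (x y : V) (a r : V → ℝ) : Prop where
  delivery_nonneg : ∀ u, 0 ≤ a u
  residual_nonneg : ∀ u, 0 ≤ r u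
  add_eq : ∀ u, (if u ∈ commonNeighborFinset G x y then (G.degree y : ℝ)⁻¹ else 0) +
    a u + r u = nbrMeasure G x u
  sum_delivery : ∑ u ∈ G.neighborFinset x, a u = (G.degree y : ℝ)⁻¹

namespace IsMassSplit

variable {G} {a r : V → ℝ}

theorem eq_zero_of_not_adj (h : IsMassSplit G x y a r) {u : V} (hu : ¬G.Adj x u) :
    a u = 0 ∧ r u = 0 := by
  have h' := h.add_eq u
  rw [nbrMeasure_of_not_adj G hu, if_neg (by simp [hu])] at h'
  constructor <;> linarith [h.delivery_nonneg u, h.residual_nonneg u]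

theorem sum_residual (h : IsMassSplit G x y a r) (hxy : G.Adj x y) :
    ∑ u ∈ G.neighborFinset x, r u =
      #(privateNeighborFinset G y x) * (G.degree y : ℝ)⁻¹ := by
  have hx := sum_nbrMeasure G hxy
  rw [← sum_congr rfl fun u _ => h.add_eq u, sum_add_distrib, sum_add_distrib, sum_ite_mem,
    inter_eq_right.2 inter_subset_left, sum_const, nsmul_eq_mul, h.sum_delivery] at hx
  have hy := one_add_triangles_add_mul_inv_degree G hxy.symm
  rw [triangles_comm, triangles] at hy
  linear_combination hx - hy

theorem residual_eq_zero (h : IsMassSplit G x y a r) (hxy : G.Adj x y)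
    (hB : (#(privateNeighborFinset G y x) : ℝ) = 0) (u : V) : r u = 0 := by
  by_cases hu : G.Adj x u
  · have hsum := h.sum_residual hxy
    rw [hB, zero_mul, sum_eq_zero_iff_of_nonneg fun u _ => h.residual_nonneg u] at hsum
    exact hsum u ((G.mem_neighborFinset x u).2 hu)
  · exact (h.eq_zero_of_not_adj hu).2

theorem sum_transportPlan_right (h : IsMassSplit G x y a r) (hxy : G.Adj x y) (u : V) :
    ∑ v ∈ G.neighborFinset y, transportPlan G x y a r u v = nbrMeasure G x u := by
  have hxNy : x ∈ G.neighborFinset y := (G.mem_neighborFinset y x).2 hxy.symm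
  have hBNy : privateNeighborFinset G y x ⊆ G.neighborFinset y := sdiff_subset
  have hcommon : ∑ v ∈ G.neighborFinset y,
      (if u ∈ commonNeighborFinset G x y ∧ v = u then (G.degree y : ℝ)⁻¹ else 0) =
      if u ∈ commonNeighborFinset G x y then (G.degree y : ℝ)⁻¹ else 0 := by
    by_cases hu : u ∈ commonNeighborFinset G x y
    · simp [hu, (mem_inter.1 hu).2]
    · simp [hu]
  simp only [transportPlan, sum_add_distrib, hcommon, sum_ite_eq', if_pos hxNy, sum_ite_mem,
    inter_eq_right.2 hBNy, sum_const, nsmul_eq_mul]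
  rw [mul_div_cancel_of_imp' fun hB => h.residual_eq_zero hxy hB u, h.add_eq]

theorem sum_transportPlan_left (h : IsMassSplit G x y a r) (hxy : G.Adj x y) (v : V) :
    ∑ u ∈ G.neighborFinset x, transportPlan G x y a r u v = nbrMeasure G y v := by
  have hcommon : ∑ u ∈ G.neighborFinset x,
      (if u ∈ commonNeighborFinset G x y ∧ v = u then (G.degree y : ℝ)⁻¹ else 0) =
      if v ∈ commonNeighborFinset G x y then (G.degree y : ℝ)⁻¹ else 0 := by
    by_cases hv : v ∈ commonNeighborFinset G x y
    · rw [sum_eq_single_of_mem v (mem_inter.1 hv).1 fun u _ hu => if_neg fun h => hu h.2.symm]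
      simp [hv]
    · rw [if_neg hv]
      exact sum_eq_zero fun u _ => if_neg fun ⟨hu, hvu⟩ => hv (hvu ▸ hu)
  have hdelivery : ∑ u ∈ G.neighborFinset x, (if v = x then a u else 0) =
      if v = x then (G.degree y : ℝ)⁻¹ else 0 := by
    split_ifs
    · exact h.sum_delivery
    · exact sum_const_zero
  have hresidual : ∑ u ∈ G.neighborFinset x, (if v ∈ privateNeighborFinset G y x then
      r u / #(privateNeighborFinset G y x) else 0) =
      if v ∈ privateNeighborFinset G y x then (G.degree y : ℝ)⁻¹ else 0 := by
    split_ifs with hv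
    · rw [← sum_div, h.sum_residual hxy, mul_div_cancel_left₀]
      exact Nat.cast_ne_zero.2 (card_ne_zero_of_mem hv)
    · exact sum_const_zero
  simp only [transportPlan, sum_add_distrib, hcommon, hdelivery, hresidual]
  by_cases hvx : v = x
  · subst hvx
    simp [privateNeighborFinset, nbrMeasure_of_adj G hxy.symm]
  by_cases hv : G.Adj y v
  · by_cases hxv : G.Adj x v <;> simp [privateNeighborFinset, nbrMeasure_of_adj G hv, hv, hxv, hvx]
  · simp [privateNeighborFinset, nbrMeasure_of_not_adj G hv, hv, hvx]

theorem isCoupling_transportPlan (h : IsMassSplit G x y a r) (hxy : G.Adj x y) :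
    IsCoupling G x y (transportPlan G x y a r) := by
  refine ⟨fun u v => ?_, fun u v hne => ⟨?_, ?_⟩, h.sum_transportPlan_right hxy,
    h.sum_transportPlan_left hxy⟩
  · have := h.delivery_nonneg u
    have := h.residual_nonneg u
    simp only [transportPlan]
    split_ifs <;> positivity
  · by_contra hu
    obtain ⟨hau, hru⟩ := h.eq_zero_of_not_adj hu
    simp [transportPlan, hau, hru, hu] at hne
  · by_contra hv
    have hvx : v ≠ x := fun hvx => hv (hvx ▸ hxy.symm)
    have hvB : v ∉ privateNeighborFinset G y x := fun hvB =>
      hv ((G.mem_neighborFinset y v).1 (mem_sdiff.1 hvB).1)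
    have hkept : ¬(u ∈ commonNeighborFinset G x y ∧ v = u) := by
      rintro ⟨hu, rfl⟩
      exact hv ((G.mem_neighborFinset y v).1 (mem_inter.1 hu).2)
    exact hne (by rw [transportPlan, if_neg hkept, if_neg hvx, if_neg hvB, zero_add, zero_add])

end IsMassSplit

noncomputable def residualMass (x y : V) (a : V → ℝ) (u : V) : ℝ :=
  nbrMeasure G x u - (if u ∈ commonNeighborFinset G x y then (G.degree y : ℝ)⁻¹ else 0) -
    a u

section Residual

variable {a : V → ℝ}

theorem residualMass_self (hxy : G.Adj x y) :
    residualMass G x y a y = (G.degree x : ℝ)⁻¹ - a y := by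
  simp [residualMass, nbrMeasure_of_adj G hxy]

theorem residualMass_of_mem_common {u : V} (hu : u ∈ commonNeighborFinset G x y) :
    residualMass G x y a u = (G.degree x : ℝ)⁻¹ - (G.degree y : ℝ)⁻¹ - a u := by
  rw [residualMass, nbrMeasure_of_adj G ((G.mem_neighborFinset x u).1 (mem_inter.1 hu).1),
    if_pos hu]

theorem residualMass_of_mem_private {u : V} (hu : u ∈ privateNeighborFinset G x y) :
    residualMass G x y a u = (G.degree x : ℝ)⁻¹ - a u := by
  have huC : u ∉ commonNeighborFinset G x y := by
    simp_all [privateNeighborFinset]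
  rw [residualMass, nbrMeasure_of_adj G ((G.mem_neighborFinset x u).1 (mem_sdiff.1 hu).1),
    if_neg huC, sub_zero]

theorem residualMass_of_not_adj {u : V} (hu : ¬G.Adj x u) : residualMass G x y a u = -a u := by
  simp [residualMass, nbrMeasure_of_not_adj G hu, hu]

end Residual

section Deliveries

variable {cy pC pA : ℝ}

theorem isMassSplit_byClass (hxy : G.Adj x y) (hcy : 0 ≤ cy) (hpC : 0 ≤ pC) (hpA : 0 ≤ pA)
    (hcy' : cy ≤ (G.degree x : ℝ)⁻¹)
    (hpC' : pC ≤ (G.degree x : ℝ)⁻¹ - (G.degree y : ℝ)⁻¹)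
    (hpA' : pA ≤ (G.degree x : ℝ)⁻¹)
    (hsum : cy + triangles G x y * pC + #(privateNeighborFinset G x y) * pA =
      (G.degree y : ℝ)⁻¹) :
    IsMassSplit G x y (byClass G x y cy pC pA) (residualMass G x y (byClass G x y cy pC pA)) := by
  refine ⟨byClass_nonneg G hcy hpC hpA, fun u => ?_, fun u => by rw [residualMass]; ring, ?_⟩
  · by_cases hu : G.Adj x u
    · rcases eq_or_mem_common_or_mem_private G hxy ((G.mem_neighborFinset x u).2 hu)
        with rfl | hu' | hu'
      · rw [residualMass_self G hxy, byClass_self]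
        linarith
      · rw [residualMass_of_mem_common G hu', byClass_of_mem_common G hu']
        linarith
      · rw [residualMass_of_mem_private G hu', byClass_of_mem_private G hu']
        linarith
    · rw [residualMass_of_not_adj G hu, byClass_of_not_adj G hxy hu, neg_zero]
  · rwa [sum_neighborFinset_of_constant_on_classes G hxy (fun u hu => byClass_of_mem_common G hu)
      fun u hu => byClass_of_mem_private G hu, byClass_self]

theorem W1_le_of_deliveries (hxy : G.Adj x y) (hcy : 0 ≤ cy) (hpC : 0 ≤ pC) (hpA : 0 ≤ pA)
    (hcy' : cy ≤ (G.degree x : ℝ)⁻¹)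
    (hpC' : pC ≤ (G.degree x : ℝ)⁻¹ - (G.degree y : ℝ)⁻¹)
    (hpA' : pA ≤ (G.degree x : ℝ)⁻¹)
    (hsum : cy + triangles G x y * pC + #(privateNeighborFinset G x y) * pA =
      (G.degree y : ℝ)⁻¹) :
    W1 G x y ≤ 1 - triangles G x y * (G.degree y : ℝ)⁻¹ +
      triangles G x y * ((G.degree x : ℝ)⁻¹ - (G.degree y : ℝ)⁻¹ - pC) +
      2 * #(privateNeighborFinset G x y) * ((G.degree x : ℝ)⁻¹ - pA) := by
  have hsplit := isMassSplit_byClass G hxy hcy hpC hpA hcy' hpC' hpA' hsum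
  have hdeg := one_add_triangles_add_mul_inv_degree G hxy
  calc W1 G x y ≤ _ := W1_le_of_isCoupling G (hsplit.isCoupling_transportPlan hxy)
    _ ≤ ∑ u ∈ G.neighborFinset x, (byClass G x y cy pC pA u +
          byClass G x y 1 2 3 u * residualMass G x y (byClass G x y cy pC pA) u) :=
      sum_dist_mul_transportPlan_le G hxy hsplit.residual_nonneg
        (byClass_nonneg G zero_le_one zero_le_two zero_le_three) fun u hu v hv =>
          dist_le_byClass G hxy hu hv
    _ = _ := by
      rw [sum_neighborFinset_of_constant_on_classes G hxy
        (fun u hu => by rw [residualMass_of_mem_common G hu, byClass_of_mem_common G hu,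
          byClass_of_mem_common G hu])
        fun u hu => by rw [residualMass_of_mem_private G hu, byClass_of_mem_private G hu,
          byClass_of_mem_private G hu],
        residualMass_self G hxy, byClass_self, byClass_self]
      linear_combination hdeg

end Deliveries

theorem W1_le_of_degree_le (hxy : G.Adj x y) (hdeg : G.degree x ≤ G.degree y) :
    W1 G x y ≤ 1 + posPart' (1 - 1 / (G.degree x : ℝ) - 1 / (G.degree y : ℝ) -
          (triangles G x y : ℝ) / (G.degree x : ℝ))
      + posPart' (1 - 1 / (G.degree x : ℝ) - 1 / (G.degree y : ℝ) -
          (triangles G x y : ℝ) / (G.degree y : ℝ))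
      - (triangles G x y : ℝ) / (G.degree y : ℝ) := by
  rw [one_div, one_div, div_eq_mul_inv, div_eq_mul_inv]
  set s := (G.degree x : ℝ)⁻¹
  set t := (G.degree y : ℝ)⁻¹
  set k := (triangles G x y : ℝ)
  set n := (#(privateNeighborFinset G x y) : ℝ)
  have hs : (1 + k + n) * s = 1 := one_add_triangles_add_mul_inv_degree G hxy
  have ht : 0 ≤ t := by positivity
  have hts : 0 ≤ s - t :=
    sub_nonneg.2 (inv_anti₀ (cast_degree_pos_of_adj G hxy) (Nat.cast_le.2 hdeg))
  have hk : 0 ≤ k := Nat.cast_nonneg _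
  have hn : 0 ≤ n := Nat.cast_nonneg _
  -- `x` draws first on the private neighbours of `x`, whose mass is the most expensive to move
  set cA := min (n * s) t
  set cC := min (k * (s - t)) (t - cA)
  have hcA : 0 ≤ cA := le_min (by positivity) ht
  have hcC : 0 ≤ cC := le_min (by positivity) (sub_nonneg.2 (min_le_right _ _))
  have hkC : k * (cC / k) = cC := mul_div_cancel_of_imp' fun hk0 => by
    simp only [cC, hk0, zero_mul]
    exact min_eq_left (sub_nonneg.2 (min_le_right _ _))
  have hnA : n * (cA / n) = cA := mul_div_cancel_of_imp' fun hn0 => by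
    simp only [cA, hn0, zero_mul, min_eq_left ht]
  have hW := W1_le_of_deliveries G hxy (cy := t - cA - cC) (pC := cC / k) (pA := cA / n)
    (by linarith [min_le_right (k * (s - t)) (t - cA)]) (div_nonneg hcC hk) (div_nonneg hcA hn)
    (by linarith) (div_le_of_le_mul₀ hk hts (by linarith [min_le_left (k * (s - t)) (t - cA)]))
    (div_le_of_le_mul₀ hn (by positivity) (by linarith [min_le_left (n * s) t]))
    (by rw [hkC, hnA]; ring)
  have hgreedy := sub_min_add_two_mul_sub_min (α := n * s) (t := t) (mul_nonneg hk hts)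
  have hα : 1 - s - t - k * s = n * s - t := by linear_combination -hs
  have hβ : 1 - s - t - k * t = n * s + k * (s - t) - t := by linear_combination -hs
  rw [hα, hβ, posPart', posPart']
  linear_combination hW + hgreedy - hkC - 2 * hnA

end Transport

theorem ricci_lower_bound_triangles (G : SimpleGraph V) [G.LocallyFinite]
    [DecidableRel G.Adj] [DecidableEq V]
    (x y : V) (hxy : G.Adj x y) :
    ricci G x y ≥
      -posPart' (1 - 1 / (G.degree x : ℝ) - 1 / (G.degree y : ℝ) -
          (triangles G x y : ℝ) / ((min (G.degree x) (G.degree y) : ℕ) : ℝ))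
      - posPart' (1 - 1 / (G.degree x : ℝ) - 1 / (G.degree y : ℝ) -
          (triangles G x y : ℝ) / ((max (G.degree x) (G.degree y) : ℕ) : ℝ))
      + (triangles G x y : ℝ) / ((max (G.degree x) (G.degree y) : ℕ) : ℝ) := by
  rw [ge_iff_le, ricci, dist_eq_one_iff_adj.2 hxy, Nat.cast_one, div_one]
  rcases le_total (G.degree x) (G.degree y) with h | h
  · have hW := W1_le_of_degree_le G hxy h
    rw [min_eq_left h, max_eq_right h]
    linarith
  · have hW := W1_le_of_degree_le G hxy.symm h
    rw [← W1_comm, ← triangles_comm, sub_right_comm (1 : ℝ) (1 / (G.degree y : ℝ))] at hW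
    rw [min_eq_right h, max_eq_left h]
    linarith
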